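/- With the sawtooth construction as above, let a_{n,k} := sup_{x' ∈ Q(n,k)} f_{n−1}(x'). Then for every n ∈ ℕ₀, k ∈ {0,…,2^{nm}−1}^{d-1}, and every x' ∈ Q(n,k) with 2^{nm}x' − k ∈ [1/4, 3/4]^{d-1}, one has f(x') − a_{n,k} ≥ (1/8)·2^{−γmn}. -/

import Mathlib

/-- The tent function `ψ(x') = (1/2 − ‖x' − (1/2,…,1/2)‖_∞)·1_{(0,1)^{n}}(x')`
(the norm on `Fin n → ℝ` is the sup norm). -/
noncomputable def sawPsi (n : ℕ) (x : Fin n → ℝ) : ℝ :=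
  Set.indicator {y : Fin n → ℝ | ∀ i, 0 < y i ∧ y i < 1}
    (fun y => 1 / 2 - ‖y - fun _ => (1 / 2 : ℝ)‖) x

/-- `g_j(x') = Σ_{k ∈ {0,…,2^{jm}−1}^{n}} ψ(2^{jm}·x' − k)`. -/
noncomputable def sawG (n m j : ℕ) (x : Fin n → ℝ) : ℝ :=
  ∑ k : Fin n → Fin (2 ^ (j * m)),
    sawPsi n (fun i => 2 ^ (j * m) * x i - (k i : ℝ))

/-- Partial sum `f_{N−1}(x') = Σ_{j=0}^{N−1} 2^{−γjm}·g_j(x')` (so `sawF n m γ 0 = f_{−1} ≡ 0`). -/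
noncomputable def sawFpartial (n m : ℕ) (γ : ℝ) (N : ℕ) (x : Fin n → ℝ) : ℝ :=
  ∑ j ∈ Finset.range N, (2 : ℝ) ^ (-(γ * ((j : ℝ) * m))) * sawG n m j x

/-- The sawtooth boundary function `f(x') = Σ_{j=0}^∞ 2^{−γjm}·g_j(x')`. -/
noncomputable def sawF (n m : ℕ) (γ : ℝ) (x : Fin n → ℝ) : ℝ :=
  ∑' j : ℕ, (2 : ℝ) ^ (-(γ * ((j : ℝ) * m))) * sawG n m j x

/-- The dyadic subcube `Q(n,k) = {x' : 2^{nm}·x' − k ∈ (0,1)^{d-1}}`. -/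
def sawQ (dd m n : ℕ) (k : Fin dd → Fin (2 ^ (n * m))) : Set (Fin dd → ℝ) :=
  {x | ∀ i, (k i : ℝ) < 2 ^ (n * m) * x i ∧ 2 ^ (n * m) * x i < (k i : ℝ) + 1}

/-- `a_{n,k} = sup_{x' ∈ Q(n,k)} f_{n−1}(x')`. -/
noncomputable def sawA (dd m : ℕ) (γ : ℝ) (n : ℕ) (k : Fin dd → Fin (2 ^ (n * m))) : ℝ :=
  sSup (sawFpartial dd m γ n '' sawQ dd m n k)

/-! On `Q(n,k)` each `g_j` with `j ≤ n` is a single tent `ψ(2^{jm}x' − K)` over the level-`j`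
cell containing `Q(n,k)`, hence varies by at most `2^{jm}·2^{−nm}` there. As `2^{(1−γ)m} ≥ 16`,
the oscillation of `f_{n−1}` on `Q(n,k)` is a geometric sum bounded by `(1/8)·2^{−γmn}`, so
`a_{n,k} ≤ f_{n−1}(x') + (1/8)·2^{−γmn}`. On the middle of the cell the new term gives
`f(x') ≥ f_n(x') ≥ f_{n−1}(x') + (1/4)·2^{−γmn}`. -/

open Finset

lemma sawPsi_eq_max (n : ℕ) (y : Fin n → ℝ) :
    sawPsi n y = max 0 (1 / 2 - ‖y - fun _ => (1 / 2 : ℝ)‖) := by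
  unfold sawPsi
  by_cases h : ∀ i, 0 < y i ∧ y i < 1
  · have hlt : ‖y - fun _ => (1 / 2 : ℝ)‖ < 1 / 2 := by
      refine (pi_norm_lt_iff (by norm_num)).2 fun i => ?_
      rw [Pi.sub_apply, Real.norm_eq_abs, abs_lt]
      constructor <;> linarith [h i]
    rw [Set.indicator_of_mem (by exact h), max_eq_right (by linarith)]
  · obtain ⟨i, hi⟩ := not_forall.1 h
    have hfar : (1 : ℝ) / 2 ≤ |y i - 1 / 2| := by
      rw [le_abs]
      by_cases h0 : 0 < y i
      · left; linarith [not_lt.1 fun h1 => hi ⟨h0, h1⟩]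
      · right; linarith
    have hcoord : |y i - 1 / 2| ≤ ‖y - fun _ => (1 / 2 : ℝ)‖ := by
      have h := norm_le_pi_norm (y - fun _ => (1 / 2 : ℝ)) i
      rwa [Pi.sub_apply, Real.norm_eq_abs] at h
    rw [Set.indicator_of_notMem (by exact h), max_eq_left (by linarith)]

lemma sawPsi_nonneg (n : ℕ) (y : Fin n → ℝ) : 0 ≤ sawPsi n y := by
  rw [sawPsi_eq_max]
  exact le_max_left _ _

lemma sawPsi_le_half (n : ℕ) (y : Fin n → ℝ) : sawPsi n y ≤ 1 / 2 := by
  rw [sawPsi_eq_max]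
  exact max_le (by norm_num) (by linarith [norm_nonneg (y - fun _ => (1 / 2 : ℝ))])

lemma abs_sawPsi_sub_sawPsi_le (n : ℕ) (y z : Fin n → ℝ) :
    |sawPsi n y - sawPsi n z| ≤ ‖y - z‖ := by
  rw [sawPsi_eq_max, sawPsi_eq_max, max_comm 0, max_comm 0]
  refine (abs_max_sub_max_le_abs _ _ _).trans ?_
  calc |1 / 2 - ‖y - fun _ => (1 / 2 : ℝ)‖ - (1 / 2 - ‖z - fun _ => (1 / 2 : ℝ)‖)|
      = |‖z - fun _ => (1 / 2 : ℝ)‖ - ‖y - fun _ => (1 / 2 : ℝ)‖| := by congr 1; ring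
    _ ≤ ‖(z - fun _ => (1 / 2 : ℝ)) - (y - fun _ => (1 / 2 : ℝ))‖ := abs_norm_sub_norm_le _ _
    _ = ‖y - z‖ := by rw [sub_sub_sub_cancel_right, norm_sub_rev]

lemma quarter_le_sawPsi {n : ℕ} {y : Fin n → ℝ} (hy : ∀ i, y i ∈ Set.Icc (1 / 4 : ℝ) (3 / 4)) :
    1 / 4 ≤ sawPsi n y := by
  have hnear : ‖y - fun _ => (1 / 2 : ℝ)‖ ≤ 1 / 4 := by
    refine (pi_norm_le_iff_of_nonneg (by norm_num)).2 fun i => ?_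
    rw [Pi.sub_apply, Real.norm_eq_abs, abs_le]
    constructor <;> linarith [(hy i).1, (hy i).2]
  rw [sawPsi_eq_max]
  exact le_max_of_le_right (by linarith)

section Cells

variable {n m j : ℕ} {k k' : Fin n → Fin (2 ^ (j * m))} {x y : Fin n → ℝ}

lemma mem_sawQ_of_sawPsi_ne_zero (h : sawPsi n (fun i => 2 ^ (j * m) * x i - (k i : ℝ)) ≠ 0) :
    x ∈ sawQ n m j k := by
  intro i
  by_contra hi
  exact h (Set.indicator_of_notMem (fun hmem => hi ⟨by linarith [(hmem i).1],
    by linarith [(hmem i).2]⟩) _)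

lemma eq_of_mem_sawQ (hk : x ∈ sawQ n m j k) (hk' : x ∈ sawQ n m j k') : k = k' := by
  funext i
  apply Fin.ext
  have h₁ : (k i : ℕ) < (k' i : ℕ) + 1 := by exact_mod_cast (hk i).1.trans (hk' i).2
  have h₂ : (k' i : ℕ) < (k i : ℕ) + 1 := by exact_mod_cast (hk' i).1.trans (hk i).2
  omega

lemma sawG_eq_of_mem_sawQ (hx : x ∈ sawQ n m j k) :
    sawG n m j x = sawPsi n (fun i => 2 ^ (j * m) * x i - (k i : ℝ)) :=
  sum_eq_single_of_mem k (mem_univ _) fun _ _ hne =>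
    by_contra fun h => hne (eq_of_mem_sawQ (mem_sawQ_of_sawPsi_ne_zero h) hx)

lemma abs_sub_le_of_mem_sawQ (hx : x ∈ sawQ n m j k) (hy : y ∈ sawQ n m j k) (i : Fin n) :
    |x i - y i| ≤ (2 ^ (j * m))⁻¹ := by
  have hpos : (0 : ℝ) < 2 ^ (j * m) := by positivity
  have hscaled : |(x i - y i) * 2 ^ (j * m)| ≤ 1 := by
    rw [abs_le]
    constructor <;> linarith [(hx i).1, (hx i).2, (hy i).1, (hy i).2]
  rwa [abs_mul, abs_of_pos hpos, ← le_div_iff₀ hpos, one_div] at hscaled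

end Cells

lemma sawPsi_le_sawG {n m j : ℕ} (k : Fin n → Fin (2 ^ (j * m))) (x : Fin n → ℝ) :
    sawPsi n (fun i => 2 ^ (j * m) * x i - (k i : ℝ)) ≤ sawG n m j x :=
  single_le_sum (f := fun k => sawPsi n (fun i => 2 ^ (j * m) * x i - (k i : ℝ)))
    (fun _ _ => sawPsi_nonneg _ _) (mem_univ k)

lemma sawG_nonneg (n m j : ℕ) (x : Fin n → ℝ) : 0 ≤ sawG n m j x :=
  sum_nonneg fun _ _ => sawPsi_nonneg _ _

lemma sawG_le_half (n m j : ℕ) (x : Fin n → ℝ) : sawG n m j x ≤ 1 / 2 := by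
  by_cases h : ∃ k : Fin n → Fin (2 ^ (j * m)),
      sawPsi n (fun i => 2 ^ (j * m) * x i - (k i : ℝ)) ≠ 0
  · obtain ⟨k, hk⟩ := h
    rw [sawG_eq_of_mem_sawQ (mem_sawQ_of_sawPsi_ne_zero hk)]
    exact sawPsi_le_half _ _
  · push Not at h
    rw [sawG, sum_eq_zero fun k _ => h k]
    norm_num

lemma exists_sawQ_superset {n m j N : ℕ} (hj : j ≤ N) (k : Fin n → Fin (2 ^ (N * m))) :
    ∃ K : Fin n → Fin (2 ^ (j * m)), sawQ n m N k ⊆ sawQ n m j K := by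
  set P := 2 ^ ((N - j) * m)
  have hP : 0 < P := by positivity
  have hpow : 2 ^ (N * m) = 2 ^ (j * m) * P := by
    rw [← pow_add, ← add_mul, Nat.add_sub_cancel' hj]
  refine ⟨fun i => ⟨k i / P, (Nat.div_lt_iff_lt_mul hP).2 (hpow ▸ (k i).isLt)⟩, fun x hx i => ?_⟩
  have hPR : (0 : ℝ) < P := by exact_mod_cast hP
  have hpowR : (2 : ℝ) ^ (N * m) = 2 ^ (j * m) * P := by exact_mod_cast hpow
  have hbelow : ((k i / P : ℕ) : ℝ) * P ≤ (k i : ℕ) := by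
    exact_mod_cast Nat.div_mul_le_self _ _
  have habove : ((k i : ℕ) : ℝ) + 1 ≤ (((k i / P : ℕ) : ℝ) + 1) * P := by
    have h : (k i : ℕ) + 1 ≤ (k i / P + 1) * P := by
      rw [add_mul, one_mul]
      exact Nat.lt_div_mul_add hP
    exact_mod_cast h
  obtain ⟨hlo, hhi⟩ := hx i
  rw [hpowR] at hlo hhi
  constructor <;> exact lt_of_mul_lt_mul_right (by linarith) hPR.le

lemma abs_sawG_sub_sawG_le {n m j N : ℕ} (hj : j ≤ N) {k : Fin n → Fin (2 ^ (N * m))}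
    {x y : Fin n → ℝ} (hx : x ∈ sawQ n m N k) (hy : y ∈ sawQ n m N k) :
    |sawG n m j x - sawG n m j y| ≤ 2 ^ (j * m) / 2 ^ (N * m) := by
  obtain ⟨K, hK⟩ := exists_sawQ_superset hj k
  rw [sawG_eq_of_mem_sawQ (hK hx), sawG_eq_of_mem_sawQ (hK hy)]
  refine (abs_sawPsi_sub_sawPsi_le _ _ _).trans
    ((pi_norm_le_iff_of_nonneg (by positivity)).2 fun i => ?_)
  rw [Pi.sub_apply, Real.norm_eq_abs, sub_sub_sub_cancel_right, ← mul_sub, abs_mul,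
    abs_of_pos (by positivity), div_eq_mul_inv]
  exact mul_le_mul_of_nonneg_left (abs_sub_le_of_mem_sawQ hx hy i) (by positivity)

lemma two_rpow_neg_mul_eq_pow (γ : ℝ) (m j : ℕ) :
    (2 : ℝ) ^ (-(γ * ((j : ℝ) * m))) = ((2 : ℝ) ^ (-(γ * m))) ^ j := by
  rw [← Real.rpow_natCast, ← Real.rpow_mul (by norm_num)]
  ring_nf

lemma sixteen_le_two_rpow_neg_mul_mul_two_pow {m : ℕ} {γ : ℝ} (hm : 4 ≤ (m : ℝ) * (1 - γ)) :
    16 ≤ (2 : ℝ) ^ (-(γ * m)) * 2 ^ m := by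
  rw [← Real.rpow_natCast 2 m, ← Real.rpow_add (by norm_num),
    show (16 : ℝ) = 2 ^ (4 : ℝ) by norm_num]
  exact Real.rpow_le_rpow_of_exponent_le (by norm_num) (by linarith)

lemma geom_sum_le_pow_div_eight {r : ℝ} (hr : 9 ≤ r) (n : ℕ) :
    ∑ j ∈ range n, r ^ j ≤ r ^ n / 8 := by
  rw [geom_sum_eq (by linarith), div_le_div_iff₀ (by linarith) (by norm_num)]
  nlinarith [pow_nonneg (show (0 : ℝ) ≤ r by linarith) n]

lemma abs_sawFpartial_sub_sawFpartial_le {n m N : ℕ} {γ : ℝ} (hm : 4 ≤ (m : ℝ) * (1 - γ))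
    {k : Fin n → Fin (2 ^ (N * m))} {x y : Fin n → ℝ}
    (hx : x ∈ sawQ n m N k) (hy : y ∈ sawQ n m N k) :
    |sawFpartial n m γ N x - sawFpartial n m γ N y| ≤ ((2 : ℝ) ^ (-(γ * m))) ^ N / 8 := by
  set ρ := (2 : ℝ) ^ (-(γ * m))
  have hterm : ∀ j ∈ range N,
      |ρ ^ j * sawG n m j x - ρ ^ j * sawG n m j y| ≤ (ρ * 2 ^ m) ^ j / (2 ^ m) ^ N := by
    intro j hj
    rw [← mul_sub, abs_mul, abs_of_pos (by positivity), mul_pow, mul_div_assoc, ← pow_mul',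
      ← pow_mul']
    exact mul_le_mul_of_nonneg_left
      (abs_sawG_sub_sawG_le (mem_range.1 hj).le hx hy) (by positivity)
  simp only [sawFpartial, two_rpow_neg_mul_eq_pow]
  calc |∑ j ∈ range N, ρ ^ j * sawG n m j x - ∑ j ∈ range N, ρ ^ j * sawG n m j y|
      ≤ ∑ j ∈ range N, (ρ * 2 ^ m) ^ j / (2 ^ m) ^ N := by
        rw [← sum_sub_distrib]
        exact (abs_sum_le_sum_abs _ _).trans (sum_le_sum hterm)
    _ ≤ (ρ * 2 ^ m) ^ N / 8 / (2 ^ m) ^ N := by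
        rw [← sum_div]
        gcongr
        exact geom_sum_le_pow_div_eight
          (by linarith [sixteen_le_two_rpow_neg_mul_mul_two_pow hm]) N
    _ = ρ ^ N / 8 := by
        field_simp
        ring

lemma summable_sawF_terms {n m : ℕ} {γ : ℝ} (hγm : 0 < γ * m) (x : Fin n → ℝ) :
    Summable fun j : ℕ => (2 : ℝ) ^ (-(γ * ((j : ℝ) * m))) * sawG n m j x := by
  have hρ : (2 : ℝ) ^ (-(γ * m)) < 1 :=
    Real.rpow_lt_one_of_one_lt_of_neg (by norm_num) (by linarith)
  refine Summable.of_nonneg_of_le (fun j => mul_nonneg (by positivity) (sawG_nonneg _ _ _ _))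
    (fun j => ?_) ((summable_geometric_of_lt_one (by positivity) hρ).mul_right (1 / 2))
  rw [two_rpow_neg_mul_eq_pow]
  exact mul_le_mul_of_nonneg_left (sawG_le_half _ _ _ _) (by positivity)

lemma sawFpartial_le_sawF {n m : ℕ} {γ : ℝ} (hγm : 0 < γ * m) (N : ℕ) (x : Fin n → ℝ) :
    sawFpartial n m γ N x ≤ sawF n m γ x :=
  (summable_sawF_terms hγm x).sum_le_tsum _
    fun j _ => mul_nonneg (by positivity) (sawG_nonneg _ _ _ _)

lemma sawA_le_sawFpartial_add {n m N : ℕ} {γ : ℝ} (hm : 4 ≤ (m : ℝ) * (1 - γ))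
    {k : Fin n → Fin (2 ^ (N * m))} {x : Fin n → ℝ} (hx : x ∈ sawQ n m N k) :
    sawA n m γ N k ≤ sawFpartial n m γ N x + ((2 : ℝ) ^ (-(γ * m))) ^ N / 8 := by
  refine csSup_le ⟨_, x, hx, rfl⟩ ?_
  rintro _ ⟨y, hy, rfl⟩
  linarith [(abs_le.1 (abs_sawFpartial_sub_sawFpartial_le hm hy hx)).2]

theorem sawF_sub_a_lower_general (d m : ℕ) (γ : ℝ)
    (hm1 : 1 ≤ (m : ℝ) * γ) (hm2 : 4 ≤ (m : ℝ) * (1 - γ))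
    (n : ℕ) (k : Fin (d - 1) → Fin (2 ^ (n * m)))
    (x : Fin (d - 1) → ℝ) (hx : x ∈ sawQ (d - 1) m n k)
    (hmid : ∀ i, 2 ^ (n * m) * x i - (k i : ℝ) ∈ Set.Icc (1 / 4 : ℝ) (3 / 4)) :
    (1 / 8) * (2 : ℝ) ^ (-(γ * ((m : ℝ) * n))) ≤
      sawF (d - 1) m γ x - sawA (d - 1) m γ n k := by
  set ρ := (2 : ℝ) ^ (-(γ * m))
  rw [mul_comm (m : ℝ), two_rpow_neg_mul_eq_pow]
  have hnext : sawFpartial (d - 1) m γ (n + 1) x =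
      sawFpartial (d - 1) m γ n x + ρ ^ n * sawG (d - 1) m n x := by
    rw [sawFpartial, sum_range_succ, two_rpow_neg_mul_eq_pow]
    rfl
  have hf := sawFpartial_le_sawF (show 0 < γ * m by linarith) (n + 1) x
  have ha := sawA_le_sawFpartial_add hm2 hx
  have hg : 1 / 4 ≤ sawG (d - 1) m n x := (quarter_le_sawPsi hmid).trans (sawPsi_le_sawG k x)
  have hgain : ρ ^ n * (1 / 4) ≤ ρ ^ n * sawG (d - 1) m n x :=
    mul_le_mul_of_nonneg_left hg (by positivity)
  linarith

/-- Lemma 7.2(iii): on the middle part of each dyadic subcube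
`Q(n,k)` (where `2^{nm}x' − k ∈ [1/4, 3/4]^{d-1}`), one has
`f(x') − a_{n,k} ≥ (1/8)·2^{−γmn}`. -/
theorem sawF_sub_a_lower (d m : ℕ) (γ : ℝ) (hd : 2 ≤ d)
    (hγ1 : ((d : ℝ) - 1) / d < γ) (hγ2 : γ < 1)
    (hm1 : 1 ≤ (m : ℝ) * γ) (hm2 : 4 ≤ (m : ℝ) * (1 - γ))
    (n : ℕ) (k : Fin (d - 1) → Fin (2 ^ (n * m)))
    (x : Fin (d - 1) → ℝ) (hx : x ∈ sawQ (d - 1) m n k)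
    (hmid : ∀ i, 2 ^ (n * m) * x i - (k i : ℝ) ∈ Set.Icc (1 / 4 : ℝ) (3 / 4)) :
    (1 / 8) * (2 : ℝ) ^ (-(γ * ((m : ℝ) * n))) ≤
      sawF (d - 1) m γ x - sawA (d - 1) m γ n k :=
  sawF_sub_a_lower_general d m γ hm1 hm2 n k x hx hmid
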